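/- Let f be a polynomial whose zeros all lie on a line L₁ in ℂ and whose 1-points all lie on a different line L₂ that intersects L₁. Then f has degree at most 2. -/

import Mathlib

/-!
By Gauss–Lucas, the critical points of `f` lie in the convex hull of its zeros, hence on `L₁`;
applied to `f - 1`, they also lie on `L₂`. So the only critical point is the intersection point
`w` of the two lines, and `f = a (z - w) ^ n + f w`. Each level set `{f = c}` with `c ≠ f w` is
then the vertex set of a regular `n`-gon centred at `w`, which is not collinear when `n ≥ 3`;
but `{f = 0}` or `{f = 1}` is such a level set and lies on a line.
-/

def IsLine (L : Set ℂ) : Prop :=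
  ∃ p d : ℂ, d ≠ 0 ∧ L = {z : ℂ | ∃ t : ℝ, z = p + (t : ℂ) * d}

open Polynomial

namespace IsLine

variable {L L' : Set ℂ} {z w : ℂ}

theorem exists_affineSubspace (hL : IsLine L) : ∃ A : AffineSubspace ℝ ℂ, (A : Set ℂ) = L := by
  obtain ⟨p, d, -, rfl⟩ := hL
  refine ⟨AffineSubspace.mk' p (ℝ ∙ d), Set.ext fun z => ?_⟩
  simp only [SetLike.mem_coe, AffineSubspace.mem_mk', vsub_eq_sub, Submodule.mem_span_singleton,
    Complex.real_smul, Set.mem_ofPred_eq, eq_sub_iff_add_eq', eq_comm]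

theorem convex (hL : IsLine L) : Convex ℝ L := by
  obtain ⟨A, rfl⟩ := hL.exists_affineSubspace
  exact A.convex

theorem affineSpan_pair_subset (hL : IsLine L) (hz : z ∈ L) (hw : w ∈ L) :
    (line[ℝ, z, w] : Set ℂ) ⊆ L := by
  obtain ⟨A, rfl⟩ := hL.exists_affineSubspace
  exact affineSpan_le.2 (Set.insert_subset hz (Set.singleton_subset_iff.2 hw))

theorem collinear (hL : IsLine L) : Collinear ℝ L := by
  obtain ⟨p, d, -, rfl⟩ := hL
  refine (collinear_iff_exists_forall_eq_smul_vadd _).2 ⟨p, d, ?_⟩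
  rintro _ ⟨t, rfl⟩
  exact ⟨t, by rw [vadd_eq_add, Complex.real_smul, add_comm]⟩

theorem subset_of_mem_inter (hL : IsLine L) (hL' : IsLine L') (hzw : z ≠ w)
    (hz : z ∈ L ∩ L') (hw : w ∈ L ∩ L') : L ⊆ L' := fun _ hx =>
  hL'.affineSpan_pair_subset hz.2 hw.2 (hL.collinear.mem_affineSpan_of_mem_of_ne hz.1 hw.1 hx hzw)

theorem eq_of_mem_inter (hL : IsLine L) (hL' : IsLine L') (hne : L ≠ L')
    (hz : z ∈ L ∩ L') (hw : w ∈ L ∩ L') : z = w := by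
  by_contra hzw
  exact hne ((hL.subset_of_mem_inter hL' hzw hz hw).antisymm
    (hL'.subset_of_mem_inter hL hzw (And.symm hz) (And.symm hw)))

end IsLine

theorem not_collinear_setOf_sub_pow_eq (w : ℂ) {c : ℂ} (hc : c ≠ 0) {n : ℕ} (hn : 3 ≤ n) :
    ¬Collinear ℝ {z : ℂ | (z - w) ^ n = c} := by
  have hn0 : n ≠ 0 := by omega
  obtain ⟨r, hr⟩ := IsAlgClosed.exists_pow_nat_eq c (Nat.pos_of_ne_zero hn0)
  have hr0 : r ≠ 0 := by
    rintro rfl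
    exact hc (by rw [← hr, zero_pow hn0])
  have hζ := Complex.isPrimitiveRoot_exp n hn0
  set S := {z : ℂ | (z - w) ^ n = c}
  set ζ := Complex.exp (2 * Real.pi * Complex.I / n)
  set u : ℕ → ℂ := fun k => w + ζ ^ k * r
  have hu : ∀ k, u k ∈ S := fun k => by
    change (w + ζ ^ k * r - w) ^ n = c
    rw [add_sub_cancel_left, mul_pow, ← pow_mul, mul_comm k, pow_mul, hζ.pow_eq_one, one_pow,
      one_mul, hr]
  have hu_ne : ∀ {i j}, i < j → j < n → u i ≠ u j := fun hij hj h =>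
    hij.ne (hζ.pow_inj (hij.trans hj) hj (mul_right_cancel₀ hr0 (add_left_cancel h)))
  have hS : EuclideanGeometry.Cospherical S := by
    refine ⟨w, ‖r‖, fun z hz => ?_⟩
    rw [Complex.dist_eq, ← pow_left_inj₀ (norm_nonneg _) (norm_nonneg r) hn0, ← norm_pow,
      ← norm_pow, hr]
    exact congrArg norm hz
  intro hcol
  refine affineIndependent_iff_not_collinear_set.1
    (hS.affineIndependent_of_mem_of_ne (hu 0) (hu 1) (hu 2) (hu_ne one_pos (by omega))
      (hu_ne two_pos (by omega)) (hu_ne one_lt_two (by omega))) (hcol.subset ?_)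
  simp [Set.insert_subset_iff, hu]

namespace Polynomial

theorem mem_of_isRoot_derivative_of_convex {P : ℂ[X]} (hP : 0 < P.degree) {K : Set ℂ}
    (hK : Convex ℝ K) (hroots : ∀ z, P.IsRoot z → z ∈ K) {z : ℂ} (hz : P.derivative.IsRoot z) :
    z ∈ K := by
  have hP' : P.derivative ≠ 0 := derivative_ne_zero.2 (natDegree_pos_iff_degree_pos.2 hP).ne'
  refine convexHull_min (fun x hx => hroots x ?_) hK
    (rootSet_derivative_subset_convexHull_rootSet hP ?_)
  · exact (mem_rootSet.1 hx).2
  · exact mem_rootSet.2 ⟨hP', hz⟩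

variable {R : Type*} [CommRing R] [IsDomain R] {P : R[X]} {w : R}

theorem eq_C_mul_X_sub_C_pow_of_forall_isRoot_eq (hP : P.Splits) (h : ∀ z, P.IsRoot z → z = w) :
    P = C P.leadingCoeff * (X - C w) ^ P.natDegree := by
  have hroots : P.roots = Multiset.replicate P.natDegree w :=
    Multiset.eq_replicate.2
      ⟨hP.natDegree_eq_card_roots.symm, fun z hz => h z (isRoot_of_mem_roots hz)⟩
  conv_lhs => rw [hP.eq_prod_roots, hroots]
  rw [Multiset.map_replicate, Multiset.prod_replicate]

theorem eq_C_mul_X_sub_C_pow_add_C_of_forall_isRoot_derivative_eq [CharZero R]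
    (hP : P.natDegree ≠ 0) (hs : P.derivative.Splits) (h : ∀ z, P.derivative.IsRoot z → z = w) :
    P = C P.leadingCoeff * (X - C w) ^ P.natDegree + C (P.eval w) := by
  set Q := P - C P.leadingCoeff * (X - C w) ^ P.natDegree
  have hQ : derivative Q = 0 := by
    rw [derivative_sub, eq_C_mul_X_sub_C_pow_of_forall_isRoot_eq hs h, derivative_C_mul,
      derivative_X_sub_C_pow, leadingCoeff_derivative, natDegree_derivative, C_mul, mul_assoc,
      sub_self]
  obtain ⟨c, hc⟩ : ∃ c, Q = C c := ⟨_, eq_C_of_derivative_eq_zero hQ⟩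
  have hcw : c = P.eval w := by simpa [Q, hP, eq_comm] using congrArg (eval w) hc
  rw [← hcw, ← hc]
  ring

theorem not_collinear_setOf_eval_eq_of_forall_isRoot_derivative_eq {P : ℂ[X]} {w c : ℂ}
    (hP : 3 ≤ P.natDegree) (h : ∀ z, P.derivative.IsRoot z → z = w) (hc : c ≠ P.eval w) :
    ¬Collinear ℝ {z | P.eval z = c} := by
  have hP' := eq_C_mul_X_sub_C_pow_add_C_of_forall_isRoot_derivative_eq (by omega)
    (IsAlgClosed.splits _) h
  have hlc : P.leadingCoeff ≠ 0 := leadingCoeff_ne_zero.2 (by rintro rfl; simp at hP)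
  refine fun hcol => not_collinear_setOf_sub_pow_eq w (div_ne_zero (sub_ne_zero.2 hc) hlc) hP
    (hcol.subset fun z hz => ?_)
  rw [Set.mem_ofPred_eq] at hz ⊢
  rw [hP']
  simp only [eval_add, eval_mul, eval_pow, eval_sub, eval_X, eval_C, hz, mul_div_cancel₀ _ hlc,
    sub_add_cancel]

end Polynomial

/-- a polynomial whose zeros lie on a line `L₁` and whose `1`-points
lie on a different line `L₂` intersecting `L₁` has degree at most `2`. -/
theorem polynomial_zeros_ones_on_intersecting_lines (f : Polynomial ℂ)
    (L₁ L₂ : Set ℂ) (hL₁ : IsLine L₁) (hL₂ : IsLine L₂)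
    (hne : L₁ ≠ L₂) (hint : (L₁ ∩ L₂).Nonempty)
    (hzeros : ∀ z : ℂ, f.eval z = 0 → z ∈ L₁)
    (hones : ∀ z : ℂ, f.eval z = 1 → z ∈ L₂) :
    f.degree ≤ 2 := by
  refine degree_le_of_natDegree_le ?_
  by_contra! hn
  have hdeg : 0 < f.degree := natDegree_pos_iff_degree_pos.1 (by omega)
  obtain ⟨w, hw⟩ := hint
  have hcrit : ∀ z, f.derivative.IsRoot z → z = w := fun z hz =>
    hL₁.eq_of_mem_inter hL₂ hne
      ⟨mem_of_isRoot_derivative_of_convex hdeg hL₁.convex hzeros hz,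
        mem_of_isRoot_derivative_of_convex (P := f - C 1) (by rwa [degree_sub_C hdeg])
          hL₂.convex (fun z h => hones z (by simpa [sub_eq_zero] using h)) (by simpa using hz)⟩
      hw
  rcases eq_or_ne (f.eval w) 0 with h0 | h0
  · exact not_collinear_setOf_eval_eq_of_forall_isRoot_derivative_eq hn hcrit (by simp [h0])
      (hL₂.collinear.subset hones)
  · exact not_collinear_setOf_eval_eq_of_forall_isRoot_derivative_eq hn hcrit (Ne.symm h0)
      (hL₁.collinear.subset hzeros)
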